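/- arXiv:2603.20424 — 3 statements merged into one kernel-verified Lean document; each statement's English description precedes it below -/
import Mathlib

section
/- Let M be a connected, nondegenerate (having at least two points), T1 Baire space. Let U be a nonempty open subset of M and let {K_i}_{i∈ℕ} be a countable family of closed subsets of M each with empty interior. Then U \ ⋃_i K_i is uncountable. -/
/-- Let `M` be a connected, nondegenerate, T1 Baire space, `U` a nonempty open
subset, and `K i` closed sets with empty interior. Then `U \ ⋃ i, K i` is
uncountable. -/
theorem uncountable_of_open_diff_meager
    {M : Type*} [TopologicalSpace M] [ConnectedSpace M] [Nontrivial M]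
    [T1Space M] [BaireSpace M]
    (U : Set M) (hU : IsOpen U) (hUne : U.Nonempty)
    (K : ℕ → Set M) (hKc : ∀ i, IsClosed (K i)) (hKi : ∀ i, interior (K i) = ∅) :
    ¬ (U \ ⋃ i, K i).Countable := by
  intro hC
  -- singletons have empty interior
  have hsing : ∀ x : M, interior ({x} : Set M) = ∅ := by
    intro x
    by_contra h
    have hopen : IsOpen ({x} : Set M) := by
      have : interior ({x} : Set M) = {x} := by
        rcases Set.eq_empty_or_nonempty (interior ({x} : Set M)) with h' | h'
        · exact absurd h' h
        · exact Set.Subset.antisymm interior_subset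
            (by rcases h' with ⟨y, hy⟩
                have := interior_subset hy
                simp only [Set.mem_singleton_iff] at this
                subst this
                intro z hz; simp only [Set.mem_singleton_iff] at hz; subst hz; exact hy)
      rw [← this]; exact isOpen_interior
    have hclopen : IsClopen ({x} : Set M) := ⟨isClosed_singleton, hopen⟩
    have := (isClopen_iff.mp hclopen).resolve_left (Set.singleton_nonempty x).ne_empty
    obtain ⟨y, hy⟩ := exists_ne x
    exact hy (by have : y ∈ ({x} : Set M) := this ▸ Set.mem_univ y; simpa using this)
  set C := U \ ⋃ i, K i with hCdef
  have hCmeagre : IsMeagre C := by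
    rw [isMeagre_iff_countable_union_isNowhereDense]
    refine ⟨(fun x => ({x} : Set M)) '' C, ?_, hC.image _, ?_⟩
    · rintro t ⟨x, -, rfl⟩
      rw [IsNowhereDense, closure_singleton]; exact hsing x
    · intro x hx
      exact Set.mem_sUnion.mpr ⟨{x}, ⟨x, hx, rfl⟩, rfl⟩
  have hKmeagre : IsMeagre (⋃ i, K i) := by
    refine isMeagre_iUnion fun i => ?_
    have hnd : IsNowhereDense (K i) := (hKc i).isNowhereDense_iff.mpr (hKi i)
    rw [isMeagre_iff_countable_union_isNowhereDense]
    refine ⟨{K i}, ?_, Set.countable_singleton _, by simp⟩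
    intro t ht
    rw [Set.mem_singleton_iff] at ht
    subst ht
    exact hnd
  have htotal : IsMeagre ((⋃ i, K i) ∪ C) := by
    have : (⋃ i, K i) ∪ C = ⋃ n : ℕ, (if n = 0 then C else ⋃ i, K i) := by
      ext x; simp only [Set.mem_iUnion, Set.mem_union]
      constructor
      · rintro (h | h)
        · exact ⟨1, by simp [h]⟩
        · exact ⟨0, by simp [h]⟩
      · rintro ⟨n, hn⟩
        by_cases h : n = 0 <;> simp [h] at hn <;> tauto
    rw [this]
    refine isMeagre_iUnion fun n => ?_
    by_cases h : n = 0 <;> simp [h, hCmeagre, hKmeagre]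
  have hdense : Dense (((⋃ i, K i) ∪ C)ᶜ) := dense_of_mem_residual htotal
  obtain ⟨x, hxc, hxU⟩ := hdense.exists_mem_open hU hUne
  refine hxc ?_
  by_cases h : x ∈ ⋃ i, K i
  · exact Or.inl h
  · exact Or.inr ⟨hxU, h⟩
end

section
/- Let M be a compact metric space. A collection 𝒞 of subsets of M is point-convergent (every sequence of distinct elements of 𝒞 has limit set of cardinality at most 1, where the limit set is the set of points that are limits of sequences x_i ∈ C_i) if and only if 𝒞 is a null family (for every ε > 0 only finitely many elements of 𝒞 have diameter greater than ε). -/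
/-!
A null family is point-convergent because points chosen from a sequence of pairwise distinct members
lie, eventually, in sets of arbitrarily small diameter, so two limits are arbitrarily close.
Conversely, if infinitely many members have diameter `> ε`, pick two points at distance `> ε` in
each of them; by compactness of `M × M` a subsequence of these pairs converges, and its two limits
are distinct points of the limit set of the corresponding subsequence of members.
-/

open Filter Topology Metric

def seqLimitSet {M : Type*} [TopologicalSpace M] (C : ℕ → Set M) : Set M :=
  {p | ∃ x : ℕ → M, (∀ i, x i ∈ C i) ∧ Tendsto x atTop (𝓝 p)}

section PseudoMetric

variable {M : Type*} [PseudoMetricSpace M]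

theorem exists_lt_dist_of_lt_diam {s : Set M} {ε : ℝ} (hε : 0 ≤ ε) (h : ε < diam s) :
    ∃ a ∈ s, ∃ b ∈ s, ε < dist a b := by
  by_contra! hs
  exact (diam_le_of_forall_dist_le hε hs).not_gt h

theorem dist_le_of_mem_seqLimitSet {C : ℕ → Set M} {ε : ℝ}
    (hb : ∀ i, Bornology.IsBounded (C i)) (hε : ∀ᶠ i in atTop, diam (C i) ≤ ε)
    {p q : M} (hp : p ∈ seqLimitSet C) (hq : q ∈ seqLimitSet C) : dist p q ≤ ε := by
  obtain ⟨x, hxC, hxp⟩ := hp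
  obtain ⟨y, hyC, hyq⟩ := hq
  refine le_of_tendsto (hxp.dist hyq) (hε.mono fun i hi => ?_)
  exact (dist_le_diam_of_mem (hb i) (hxC i) (hyC i)).trans hi

theorem exists_strictMono_le_dist_of_mem_seqLimitSet [CompactSpace M] {C : ℕ → Set M} {ε : ℝ}
    (hε : 0 ≤ ε) (h : ∀ i, ε < diam (C i)) :
    ∃ φ : ℕ → ℕ, StrictMono φ ∧
      ∃ p ∈ seqLimitSet (C ∘ φ), ∃ q ∈ seqLimitSet (C ∘ φ), ε ≤ dist p q := by
  choose a ha b hb hab using fun i => exists_lt_dist_of_lt_diam hε (h i)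
  obtain ⟨⟨p, q⟩, φ, hφ, hlim⟩ := CompactSpace.tendsto_subseq fun i => (a i, b i)
  have hap : Tendsto (a ∘ φ) atTop (𝓝 p) := (continuous_fst.tendsto _).comp hlim
  have hbq : Tendsto (b ∘ φ) atTop (𝓝 q) := (continuous_snd.tendsto _).comp hlim
  exact ⟨φ, hφ, p, ⟨a ∘ φ, fun i => ha _, hap⟩, q, ⟨b ∘ φ, fun i => hb _, hbq⟩,
    ge_of_tendsto' (hap.dist hbq) fun i => (hab _).le⟩

theorem tendsto_diam_zero_of_injective {𝒞 : Set (Set M)}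
    (h𝒞 : ∀ ε : ℝ, 0 < ε → {C ∈ 𝒞 | ε < diam C}.Finite) {C : ℕ → Set M}
    (hC : ∀ i, C i ∈ 𝒞) (hinj : Function.Injective C) :
    Tendsto (fun i => diam (C i)) atTop (𝓝 0) := by
  rw [← Nat.cofinite_eq_atTop]
  refine tendsto_order.2 ⟨fun a ha => Eventually.of_forall fun _ => ha.trans_le diam_nonneg,
    fun ε hε => ?_⟩
  have hfin : {i | ε / 2 < diam (C i)}.Finite :=
    ((h𝒞 _ (half_pos hε)).preimage hinj.injOn).subset fun i hi => ⟨hC i, hi⟩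
  exact hfin.eventually_cofinite_notMem.mono fun i hi => (not_lt.1 hi).trans_lt (half_lt_self hε)

end PseudoMetric

theorem seqLimitSet_subsingleton_of_tendsto_diam {M : Type*} [MetricSpace M] {C : ℕ → Set M}
    (hb : ∀ i, Bornology.IsBounded (C i)) (hC : Tendsto (fun i => diam (C i)) atTop (𝓝 0)) :
    (seqLimitSet C).Subsingleton := fun p hp q hq =>
  dist_le_zero.1 <| le_of_forall_pos_le_add fun ε hε => by
    simpa using dist_le_of_mem_seqLimitSet hb (hC.eventually (ge_mem_nhds hε)) hp hq

theorem pointConvergent_iff_nullFamily_general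
    {M : Type*} [MetricSpace M] [CompactSpace M]
    (𝒞 : Set (Set M)) :
    (∀ C : ℕ → Set M, (∀ i, C i ∈ 𝒞) → Function.Injective C →
        {p : M | ∃ x : ℕ → M, (∀ i, x i ∈ C i) ∧
          Filter.Tendsto x Filter.atTop (nhds p)}.Subsingleton)
      ↔ (∀ ε : ℝ, 0 < ε → {C ∈ 𝒞 | ε < Metric.diam C}.Finite) := by
  refine ⟨fun hpc ε hε => ?_, fun hnull C hC hinj =>
    seqLimitSet_subsingleton_of_tendsto_diam (fun i => .all _)
      (tendsto_diam_zero_of_injective hnull hC hinj)⟩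
  by_contra hinf
  set e := Set.Infinite.natEmbedding _ hinf
  have hinj : Function.Injective fun i => (e i : Set M) := Subtype.val_injective.comp e.injective
  obtain ⟨φ, hφ, p, hp, q, hq, hpq⟩ :=
    exists_strictMono_le_dist_of_mem_seqLimitSet (C := fun i => (e i : Set M)) hε.le
      fun i => (e i).2.2
  have : p = q := hpc _ (fun i => (e _).2.1) (hinj.comp hφ.injective) hp hq
  exact hε.not_ge (by simpa [this] using hpq)

/-- In a compact metric space, a collection of nonempty subsets is
point-convergent (every sequence of pairwise distinct members has at most one
limit point, where limit points are limits of sequences of points chosen from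
the members) if and only if it is a null family (for every `ε > 0` only
finitely many members have diameter `> ε`). -/
theorem pointConvergent_iff_nullFamily
    {M : Type*} [MetricSpace M] [CompactSpace M]
    (𝒞 : Set (Set M)) (hne : ∀ C ∈ 𝒞, C.Nonempty) :
    (∀ C : ℕ → Set M, (∀ i, C i ∈ 𝒞) → Function.Injective C →
        {p : M | ∃ x : ℕ → M, (∀ i, x i ∈ C i) ∧
          Filter.Tendsto x Filter.atTop (nhds p)}.Subsingleton)
      ↔ (∀ ε : ℝ, 0 < ε → {C ∈ 𝒞 | ε < Metric.diam C}.Finite) :=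
  pointConvergent_iff_nullFamily_general 𝒞
end

section
/- Let M be a connected topological space, C₁ and C₂ closed subsets and I = C₁ ∩ C₂. Suppose M \ C₁ = M₁⁺ ⊔ M₁⁻ and M \ C₂ = M₂⁺ ⊔ M₂⁻ are partitions into clopen subsets of the respective complements, with closure(M_i^ε) = M_i^ε ∪ C_i for ε ∈ {+,−}, i ∈ {1,2}. Assume: C₁ \ I ⊆ M₂⁺, C₂ \ I ⊆ M₁⁺, and M \ I is path-connected with no point of I path-separating M. Then M₁⁻ ∩ M₂⁻ = ∅. -/
/-- Let `M` be a path connected space with divisions `(C₁,{M₁⁺,M₁⁻})` and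
`(C₂,{M₂⁺,M₂⁻})`, `I = C₁ ∩ C₂`. Assume `C₁ \ I ⊆ M₂⁺`, `C₂ \ I ⊆ M₁⁺`, and
`M \ I` is path-connected. Then `M₁⁻ ∩ M₂⁻ = ∅`. -/
theorem opposite_halfspaces_disjoint
    {M : Type*} [TopologicalSpace M] [PathConnectedSpace M]
    (C₁ C₂ M₁p M₁m M₂p M₂m : Set M)
    (hC₁closed : IsClosed C₁) (hC₁nwd : interior C₁ = ∅)
    (hC₂closed : IsClosed C₂) (hC₂nwd : interior C₂ = ∅)
    (h₁ne : M₁p.Nonempty ∧ M₁m.Nonempty) (h₂ne : M₂p.Nonempty ∧ M₂m.Nonempty)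
    (h₁disj : Disjoint M₁p M₁m) (h₁union : M₁p ∪ M₁m = C₁ᶜ)
    (h₂disj : Disjoint M₂p M₂m) (h₂union : M₂p ∪ M₂m = C₂ᶜ)
    (h₁popen : IsOpen (Subtype.val ⁻¹' M₁p : Set (C₁ᶜ : Set M)))
    (h₁pclosed : IsClosed (Subtype.val ⁻¹' M₁p : Set (C₁ᶜ : Set M)))
    (h₂popen : IsOpen (Subtype.val ⁻¹' M₂p : Set (C₂ᶜ : Set M)))
    (h₂pclosed : IsClosed (Subtype.val ⁻¹' M₂p : Set (C₂ᶜ : Set M)))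
    (hcl₁p : closure M₁p = M₁p ∪ C₁) (hcl₁m : closure M₁m = M₁m ∪ C₁)
    (hcl₂p : closure M₂p = M₂p ∪ C₂) (hcl₂m : closure M₂m = M₂m ∪ C₂)
    (hC₁I : C₁ \ (C₁ ∩ C₂) ⊆ M₂p) (hC₂I : C₂ \ (C₁ ∩ C₂) ⊆ M₁p)
    (hIpath : IsPathConnected ((C₁ ∩ C₂)ᶜ : Set M)) :
    M₁m ∩ M₂m = ∅ := by
  by_contra hne
  obtain ⟨x, hx1, hx2⟩ := Set.nonempty_iff_ne_empty.2 hne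
  have hC₁open : IsOpen (C₁ᶜ) := hC₁closed.isOpen_compl
  have hC₂open : IsOpen (C₂ᶜ) := hC₂closed.isOpen_compl
  -- membership characterizations
  have h₁mem : ∀ z, z ∈ M₁m ↔ z ∈ C₁ᶜ ∧ z ∉ M₁p := by
    intro z
    constructor
    · intro hz
      refine ⟨h₁union ▸ Set.mem_union_right _ hz, fun hp => ?_⟩
      exact h₁disj.ne_of_mem hp hz rfl
    · rintro ⟨hz, hp⟩
      rcases (h₁union ▸ hz : z ∈ M₁p ∪ M₁m) with h | h
      · exact absurd h hp
      · exact h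
  have h₂mem : ∀ z, z ∈ M₂m ↔ z ∈ C₂ᶜ ∧ z ∉ M₂p := by
    intro z
    constructor
    · intro hz
      refine ⟨h₂union ▸ Set.mem_union_right _ hz, fun hp => ?_⟩
      exact h₂disj.ne_of_mem hp hz rfl
    · rintro ⟨hz, hp⟩
      rcases (h₂union ▸ hz : z ∈ M₂p ∪ M₂m) with h | h
      · exact absurd h hp
      · exact h
  -- M₁m and M₂m are open in M
  have h₁m_img : M₁m = Subtype.val '' ((Subtype.val ⁻¹' M₁p : Set (C₁ᶜ : Set M))ᶜ) := by
    ext z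
    simp only [Set.mem_image, Set.mem_compl_iff, Set.mem_preimage, Subtype.exists,
      exists_and_right, exists_eq_right, h₁mem z]
    tauto
  have h₂m_img : M₂m = Subtype.val '' ((Subtype.val ⁻¹' M₂p : Set (C₂ᶜ : Set M))ᶜ) := by
    ext z
    simp only [Set.mem_image, Set.mem_compl_iff, Set.mem_preimage, Subtype.exists,
      exists_and_right, exists_eq_right, h₂mem z]
    tauto
  have h₁m_open : IsOpen M₁m := by
    rw [h₁m_img]
    exact hC₁open.isOpenMap_subtype_val _ h₁pclosed.isOpen_compl
  have h₂m_open : IsOpen M₂m := by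
    rw [h₂m_img]
    exact hC₂open.isOpenMap_subtype_val _ h₂pclosed.isOpen_compl
  set A := M₁m ∩ M₂m with hA
  have hAopen : IsOpen A := h₁m_open.inter h₂m_open
  -- relative closedness of A in (C₁ ∩ C₂)ᶜ
  have hrel : ∀ z ∈ (C₁ ∩ C₂)ᶜ, z ∈ closure A → z ∈ A := by
    intro z hzI hzcl
    have hz1 : z ∈ M₁m ∪ C₁ := hcl₁m ▸ closure_mono Set.inter_subset_left hzcl
    have hz2 : z ∈ M₂m ∪ C₂ := hcl₂m ▸ closure_mono Set.inter_subset_right hzcl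
    rcases hz1 with hz1 | hz1 <;> rcases hz2 with hz2 | hz2
    · exact ⟨hz1, hz2⟩
    · -- z ∈ M₁m, z ∈ C₂ : then z ∈ C₂ \ I ⊆ M₁p, contradiction
      have hzC1 : z ∉ C₁ := ((h₁mem z).1 hz1).1
      have : z ∈ M₁p := hC₂I ⟨hz2, fun hI => hzC1 hI.1⟩
      exact absurd rfl (h₁disj.ne_of_mem this hz1)
    · have hzC2 : z ∉ C₂ := ((h₂mem z).1 hz2).1
      have : z ∈ M₂p := hC₁I ⟨hz1, fun hI => hzC2 hI.2⟩
      exact absurd rfl (h₂disj.ne_of_mem this hz2)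
    · exact absurd ⟨hz1, hz2⟩ hzI
  obtain ⟨p, hp⟩ := h₁ne.1
  have hpC1 : p ∈ C₁ᶜ := h₁union ▸ Set.mem_union_left _ hp
  have hpI : p ∈ (C₁ ∩ C₂)ᶜ := fun hI => hpC1 hI.1
  have hpcl : p ∉ closure A := by
    intro hpcl
    have : p ∈ M₁m ∪ C₁ := hcl₁m ▸ closure_mono Set.inter_subset_left hpcl
    rcases this with h | h
    · exact absurd rfl (h₁disj.ne_of_mem hp h)
    · exact hpC1 h
  have hxI : x ∈ (C₁ ∩ C₂)ᶜ := fun hI => ((h₁mem x).1 hx1).1 hI.1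
  have hpre : IsPreconnected ((C₁ ∩ C₂)ᶜ : Set M) := hIpath.isConnected.isPreconnected
  obtain ⟨z, _, hzA, hznA⟩ := hpre A (closure A)ᶜ hAopen isClosed_closure.isOpen_compl
    (fun z hz => by
      by_cases h : z ∈ closure A
      · exact Or.inl (hrel z hz h)
      · exact Or.inr h)
    ⟨x, hxI, hx1, hx2⟩ ⟨p, hpI, hpcl⟩
  exact hznA (subset_closure hzA)
end
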